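/- Covariantly constant solutions of Yang-Mills: suppose smooth maps C_μ : ℝ^m → A satisfy the zero-curvature condition ∂_μ C_ν − ∂_ν C_μ − [C_μ, C_ν] = 0, and K_μ : ℝ^m → A are covariantly constant, i.e., ∂_μ K_ν − [C_μ, K_ν] = 0 for all μ, ν, and satisfy the algebraic equations Σ_μ [K_μ, [K^μ, K^ν]] = J^ν with J^ν covariantly constant (∂_μ J^ν − [C_μ, J^ν] = 0). Then B_μ := C_μ + K_μ together with F_{μν} := −[K_μ, K_ν] satisfies the Yang-Mills equations: ∂_μ B_ν − ∂_ν B_μ − [B_μ, B_ν] = F_{μν} and Σ_μ (∂_μ F^{μν} − [B_μ, F^{μν}]) = J^ν. -/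

import Mathlib

/-- Partial derivative in the μ-th coordinate direction. -/
noncomputable def pdv {m : ℕ} {A : Type*} [NormedAddCommGroup A] [NormedSpace ℝ A]
    (μ : Fin m) (f : (Fin m → ℝ) → A) (x : Fin m → ℝ) : A :=
  fderiv ℝ f x (Pi.single μ 1)

section Aux

variable {m : ℕ} {A : Type*} [NormedRing A] [NormedAlgebra ℝ A]

lemma pdv_add' {f g : (Fin m → ℝ) → A} {x} (hf : DifferentiableAt ℝ f x)
    (hg : DifferentiableAt ℝ g x) (μ : Fin m) :
    pdv μ (fun y => f y + g y) x = pdv μ f x + pdv μ g x := by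
  simp [pdv, fderiv_fun_add hf hg]

lemma pdv_sub' {f g : (Fin m → ℝ) → A} {x} (hf : DifferentiableAt ℝ f x)
    (hg : DifferentiableAt ℝ g x) (μ : Fin m) :
    pdv μ (fun y => f y - g y) x = pdv μ f x - pdv μ g x := by
  simp [pdv, fderiv_fun_sub hf hg]

lemma pdv_neg' {f : (Fin m → ℝ) → A} {x} (μ : Fin m) :
    pdv μ (fun y => -f y) x = -pdv μ f x := by
  simp [pdv, fderiv_neg]

lemma pdv_mul' {f g : (Fin m → ℝ) → A} {x} (hf : DifferentiableAt ℝ f x)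
    (hg : DifferentiableAt ℝ g x) (μ : Fin m) :
    pdv μ (fun y => f y * g y) x = f x * pdv μ g x + pdv μ f x * g x := by
  simp [pdv, fderiv_fun_mul' hf hg, smul_eq_mul]

end Aux

/-- covariantly constant solutions of the Yang-Mills equations:
B_μ = C_μ + K_μ, F_{μν} = −[K_μ, K_ν]. -/
theorem covariantly_constant_yang_mills {m : ℕ} {A : Type*}
    [NormedRing A] [NormedAlgebra ℝ A]
    (ρ : Fin m → ℝ) (hρ : ∀ μ, ρ μ = 1 ∨ ρ μ = -1)
    (C K J : Fin m → (Fin m → ℝ) → A)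
    (hC : ∀ μ, ContDiff ℝ (⊤ : ℕ∞) (C μ)) (hK : ∀ μ, ContDiff ℝ (⊤ : ℕ∞) (K μ))
    (hzc : ∀ μ ν x, pdv μ (C ν) x - pdv ν (C μ) x
        - (C μ x * C ν x - C ν x * C μ x) = 0)
    (hKcc : ∀ μ ν x, pdv μ (K ν) x - (C μ x * K ν x - K ν x * C μ x) = 0)
    (hJcc : ∀ μ ν x, pdv μ (J ν) x - (C μ x * J ν x - J ν x * C μ x) = 0)
    (halg : ∀ ν x, ∑ μ, (ρ μ * ρ ν) •
        (K μ x * (K μ x * K ν x - K ν x * K μ x)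
          - (K μ x * K ν x - K ν x * K μ x) * K μ x) = J ν x)
    (B : Fin m → (Fin m → ℝ) → A) (hB : ∀ μ, B μ = fun y => C μ y + K μ y)
    (F : Fin m → Fin m → (Fin m → ℝ) → A)
    (hF : ∀ μ ν, F μ ν = fun y => -(K μ y * K ν y - K ν y * K μ y)) :
    (∀ μ ν x, pdv μ (B ν) x - pdv ν (B μ) x
        - (B μ x * B ν x - B ν x * B μ x) = F μ ν x) ∧
    (∀ ν x, ∑ μ, (ρ μ * ρ ν) •
        (pdv μ (F μ ν) x - (B μ x * F μ ν x - F μ ν x * B μ x)) = J ν x) := by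
  have dC : ∀ μ x, DifferentiableAt ℝ (C μ) x :=
    fun μ x => ((hC μ).differentiable (by simp)).differentiableAt
  have dK : ∀ μ x, DifferentiableAt ℝ (K μ) x :=
    fun μ x => ((hK μ).differentiable (by simp)).differentiableAt
  have eK : ∀ μ ν x, pdv μ (K ν) x = C μ x * K ν x - K ν x * C μ x :=
    fun μ ν x => sub_eq_zero.mp (hKcc μ ν x)
  constructor
  · intro μ ν x
    have e1 : pdv μ (C ν) x = C μ x * C ν x - C ν x * C μ x + pdv ν (C μ) x :=
      sub_eq_iff_eq_add.mp (sub_eq_zero.mp (hzc μ ν x))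
    rw [hB, hB, hF]
    rw [pdv_add' (dC ν x) (dK ν x) μ, pdv_add' (dC μ x) (dK μ x) ν,
      eK μ ν x, eK ν μ x, e1]
    simp only
    noncomm_ring
  · intro ν x
    rw [← halg ν x]
    refine Finset.sum_congr rfl fun μ _ => ?_
    congr 1
    rw [hF, hB]
    simp only
    rw [pdv_neg', pdv_sub' (f := fun y => K μ y * K ν y) (g := fun y => K ν y * K μ y) ((dK μ x).mul (dK ν x)) ((dK ν x).mul (dK μ x)) μ,
      pdv_mul' (dK μ x) (dK ν x) μ, pdv_mul' (dK ν x) (dK μ x) μ,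
      eK μ μ x, eK μ ν x]
    noncomm_ring
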